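/- arXiv:2105.07422 — 3 statements merged into one kernel-verified Lean document; each statement's English description precedes it below -/
import Mathlib

section
/- For any square-free positive integer j ≥ 2, the sum over primes p dividing j of (log p)/p is O(log log j); that is, there exists an absolute constant C such that for all square-free j ≥ 3, ∑_{p | j} (log p)/p ≤ C · log log j. -/
set_option maxHeartbeats 1000000

open Finset

lemma blk (k : ℕ) :
    ∑ p ∈ (Finset.Ioc (2^k) (2^(k+1))).filter Nat.Prime, Real.log p / p
      ≤ 8 * Real.log 2 := by
  rcases Nat.eq_zero_or_pos k with rfl | hk
  · have : (Finset.Ioc (2^0) (2^(0+1))).filter Nat.Prime = {2} := by decide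
    rw [this]
    simp only [Finset.sum_singleton, Nat.cast_ofNat]
    have h2 : (0:ℝ) < Real.log 2 := Real.log_pos (by norm_num)
    nlinarith
  · set B := (Finset.Ioc (2^k) (2^(k+1))).filter Nat.Prime with hB
    -- card bound in ℕ : B.card * k ≤ 2^(k+2)
    have hsub : B ⊆ (Finset.range (2^(k+1) + 1)).filter Nat.Prime := by
      intro p hp
      simp only [hB, Finset.mem_filter, Finset.mem_Ioc, Finset.mem_range] at hp ⊢
      exact ⟨Nat.lt_succ_of_le hp.1.2, hp.2⟩
    have hdvd : (∏ p ∈ B, p) ∣ primorial (2^(k+1)) :=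
      Finset.prod_dvd_prod_of_subset _ _ _ hsub
    have hle : ∏ p ∈ B, p ≤ 4 ^ (2^(k+1)) :=
      le_trans (Nat.le_of_dvd (primorial_pos _) hdvd) (primorial_le_4_pow _)
    have hlow : (2^k) ^ B.card ≤ ∏ p ∈ B, p := by
      apply Finset.pow_card_le_prod
      intro p hp
      simp only [hB, Finset.mem_filter, Finset.mem_Ioc] at hp
      exact hp.1.1.le
    have hcard : B.card * k ≤ 2^(k+2) := by
      rw [mul_comm]
      have h1 : (2:ℕ) ^ (k * B.card) ≤ 2 ^ (2 * 2^(k+1)) := by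
        calc (2:ℕ) ^ (k * B.card) = (2^k) ^ B.card := by rw [pow_mul]
          _ ≤ 4 ^ (2^(k+1)) := le_trans hlow hle
          _ = 2 ^ (2 * 2^(k+1)) := by rw [pow_mul]; norm_num
      have h2 := (Nat.pow_le_pow_iff_right (le_refl 2)).mp h1
      have h3 : 2^(k+2) = 2 * 2^(k+1) := by ring
      omega
    -- per-term bound
    have hterm : ∀ p ∈ B, Real.log p / p ≤ (k+1) * Real.log 2 / 2^k := by
      intro p hp
      simp only [hB, Finset.mem_filter, Finset.mem_Ioc] at hp
      have hp2 : 2 ≤ p := hp.2.two_le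
      have hnum : Real.log p ≤ (k+1) * Real.log 2 := by
        calc Real.log p ≤ Real.log (2^(k+1) : ℕ) := by
              apply Real.log_le_log (by positivity)
              exact_mod_cast hp.1.2
          _ = (k+1) * Real.log 2 := by
              rw [Nat.cast_pow, Real.log_pow]; push_cast; ring
      apply div_le_div₀ (by positivity) hnum (by positivity)
      exact_mod_cast hp.1.1.le
    calc ∑ p ∈ B, Real.log p / p ≤ B.card • ((k+1) * Real.log 2 / 2^k) :=
          Finset.sum_le_card_nsmul _ _ _ hterm
      _ = (B.card : ℝ) * ((k+1) * Real.log 2 / 2^k) := by rw [nsmul_eq_mul]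
      _ ≤ 8 * Real.log 2 := by
          rw [mul_div_assoc', div_le_iff₀ (by positivity)]
          have h2 : (0:ℝ) ≤ Real.log 2 := Real.log_nonneg (by norm_num)
          have hc : (B.card : ℝ) * (k+1) ≤ 8 * 2^k := by
            have : B.card * (k+1) ≤ 8 * 2^k := by
              calc B.card * (k+1) ≤ B.card * (2*k) := by
                    apply Nat.mul_le_mul_left; omega
                _ = 2 * (B.card * k) := by ring
                _ ≤ 2 * 2^(k+2) := by omega
                _ = 8 * 2^k := by ring
            exact_mod_cast this
          nlinarith
lemma small_primes (m : ℕ) :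
    ∑ p ∈ (Finset.range (2^m + 1)).filter Nat.Prime, Real.log p / p
      ≤ 8 * Real.log 2 * m + 1 := by
  induction m with
  | zero =>
    have : (Finset.range (2^0 + 1)).filter Nat.Prime = ∅ := by decide
    rw [this]; norm_num
  | succ m ih =>
    have hsplit : (Finset.range (2^(m+1) + 1)).filter Nat.Prime =
        (Finset.range (2^m + 1)).filter Nat.Prime ∪
        (Finset.Ioc (2^m) (2^(m+1))).filter Nat.Prime := by
      rw [← Finset.filter_union]
      congr 1
      ext x
      simp only [Finset.mem_range, Finset.mem_union, Finset.mem_Ioc]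
      constructor
      · intro h
        have : 2^m ≤ 2^(m+1) := Nat.pow_le_pow_right (by norm_num) (by omega)
        omega
      · intro h
        have : 2^m ≤ 2^(m+1) := Nat.pow_le_pow_right (by norm_num) (by omega)
        omega
    have hdisj : Disjoint ((Finset.range (2^m + 1)).filter Nat.Prime)
        ((Finset.Ioc (2^m) (2^(m+1))).filter Nat.Prime) := by
      apply Finset.disjoint_filter_filter
      rw [Finset.disjoint_left]
      intro x hx hx2
      simp only [Finset.mem_range] at hx
      simp only [Finset.mem_Ioc] at hx2
      omega
    rw [hsplit, Finset.sum_union hdisj]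
    have := blk m
    push_cast
    linarith

theorem sum_log_div_self_primeFactors_isBigO_loglog :
    ∃ C : ℝ, ∀ j : ℕ, 3 ≤ j → Squarefree j →
      ∑ p ∈ j.primeFactors, Real.log p / p ≤ C * Real.log (Real.log j) := by
  use 43 / Real.log (Real.log 3) + 14
  intro j hj hsf
  have hj0 : (0:ℝ) < j := by positivity
  have hlog2_pos : (0:ℝ) < Real.log 2 := Real.log_pos (by norm_num)
  have hlog2_le : Real.log 2 ≤ 0.7 := by
    have := Real.log_two_lt_d9; linarith
  have hlog2_ge : (0.5:ℝ) ≤ Real.log 2 := by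
    have := Real.log_two_gt_d9; linarith
  have hlog3_ge : (1:ℝ) ≤ Real.log 3 := by
    have h1 : Real.exp 1 ≤ 3 := by
      have := Real.exp_one_lt_d9; linarith
    calc (1:ℝ) = Real.log (Real.exp 1) := (Real.log_exp 1).symm
      _ ≤ Real.log 3 := Real.log_le_log (Real.exp_pos 1) h1
  have hlog3_le : Real.log 3 ≤ (1.4:ℝ) := by
    calc Real.log 3 ≤ Real.log 4 := Real.log_le_log (by norm_num) (by norm_num)
      _ = 2 * Real.log 2 := by
          rw [show (4:ℝ) = 2^2 by norm_num, Real.log_pow]; push_cast; ring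
      _ ≤ 1.4 := by linarith
  have hlj_ge : (1:ℝ) ≤ Real.log j := by
    calc (1:ℝ) ≤ Real.log 3 := hlog3_ge
      _ ≤ Real.log j := Real.log_le_log (by norm_num) (by exact_mod_cast hj)
  have hllj_ge : Real.log (Real.log 3) ≤ Real.log (Real.log j) := by
    apply Real.log_le_log (by linarith)
    exact Real.log_le_log (by norm_num) (by exact_mod_cast hj)
  have hll3_pos : (0:ℝ) < Real.log (Real.log 3) := by
    apply Real.log_pos
    rw [Real.lt_log_iff_exp_lt (by norm_num)]
    have := Real.exp_one_lt_d9
    linarith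
  set K : ℕ := Nat.log 2 j + 1 with hK
  set m : ℕ := Nat.log 2 K + 3 with hm
  have hK2 : 2 ≤ K := by
    have : 1 ≤ Nat.log 2 j := Nat.le_log_of_pow_le (by norm_num) (by omega)
    omega
  -- j < 2^K
  have hjltK : j < 2^K := Nat.lt_pow_succ_log_self (by norm_num) j
  -- 4K ≤ 2^m
  have h4K : 4 * K ≤ 2^m := by
    have h1 : K < 2^(Nat.log 2 K + 1) := Nat.lt_pow_succ_log_self (by norm_num) K
    have : 2^m = 4 * 2^(Nat.log 2 K + 1) := by rw [hm]; ring
    omega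
  have h2m8 : 8 ≤ 2^m := by omega
  -- ω(j) ≤ K
  have homega : j.primeFactors.card ≤ K := by
    have h1 : 2 ^ j.primeFactors.card ≤ j := by
      calc 2 ^ j.primeFactors.card ≤ ∏ p ∈ j.primeFactors, p :=
            Finset.pow_card_le_prod _ _ _ (fun p hp => (Nat.prime_of_mem_primeFactors hp).two_le)
        _ = j := Nat.prod_primeFactors_of_squarefree hsf
    have := (Nat.pow_le_pow_iff_right (le_refl 2)).mp (le_trans h1 hjltK.le)
    omega
  -- real bounds: (K:ℝ) ≤ 3 log j
  have hKreal : (K:ℝ) ≤ 3 * Real.log j := by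
    have h1 : (2:ℕ)^(Nat.log 2 j) ≤ j := Nat.pow_log_le_self 2 (by omega)
    have h2 : (Nat.log 2 j : ℝ) * Real.log 2 ≤ Real.log j := by
      rw [← Real.log_pow]
      apply Real.log_le_log (by positivity)
      exact_mod_cast h1
    have h3 : (Nat.log 2 j : ℝ) ≤ 2 * Real.log j := by nlinarith
    rw [hK]; push_cast; linarith
  -- (m:ℝ) ≤ 2 log log j + 6
  have hmreal : (m:ℝ) ≤ 2 * Real.log (Real.log j) + 6 := by
    have h1 : (2:ℕ)^(Nat.log 2 K) ≤ K := Nat.pow_log_le_self 2 (by omega)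
    have h2 : (Nat.log 2 K : ℝ) * Real.log 2 ≤ Real.log K := by
      rw [← Real.log_pow]
      apply Real.log_le_log (by positivity)
      exact_mod_cast h1
    have h3 : Real.log K ≤ Real.log 3 + Real.log (Real.log j) := by
      calc Real.log K ≤ Real.log (3 * Real.log j) := by
            apply Real.log_le_log (by exact_mod_cast (by omega : 0 < K)) hKreal
        _ = Real.log 3 + Real.log (Real.log j) := by
            rw [Real.log_mul (by norm_num) (by linarith)]
      
    have h4 : (Nat.log 2 K : ℝ) ≤ 2 * Real.log K := by nlinarith
    have hlK : 0 ≤ Real.log K := Real.log_nonneg (by exact_mod_cast (by omega : 1 ≤ K))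
    rw [hm]; push_cast; nlinarith
  -- Split
  set S1 := j.primeFactors.filter (fun p => p ≤ 2^m) with hS1
  set S2 := j.primeFactors.filter (fun p => ¬ p ≤ 2^m) with hS2
  have hsplit : ∑ p ∈ j.primeFactors, Real.log p / p =
      ∑ p ∈ S1, Real.log p / p + ∑ p ∈ S2, Real.log p / p :=
    (Finset.sum_filter_add_sum_filter_not _ _ _).symm
  -- Part A
  have hA : ∑ p ∈ S1, Real.log p / p ≤ 8 * Real.log 2 * m + 1 := by
    refine le_trans (Finset.sum_le_sum_of_subset_of_nonneg ?_ ?_) (small_primes m)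
    · intro p hp
      simp only [hS1, Finset.mem_filter] at hp
      simp only [Finset.mem_filter, Finset.mem_range]
      exact ⟨by omega, Nat.prime_of_mem_primeFactors hp.1⟩
    · intro p hp _
      simp only [Finset.mem_filter, Finset.mem_range] at hp
      have : (2:ℝ) ≤ p := by exact_mod_cast hp.2.two_le
      have : (0:ℝ) ≤ Real.log p := Real.log_nonneg (by linarith)
      positivity
  -- Part B
  have hB : ∑ p ∈ S2, Real.log p / p ≤ (m:ℝ) := by
    have hterm : ∀ p ∈ S2, Real.log p / p ≤ (m:ℝ) * Real.log 2 / 2^m := by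
      intro p hp
      simp only [hS2, Finset.mem_filter, not_le] at hp
      have hp2m : (2:ℝ)^m ≤ p := by exact_mod_cast hp.2.le
      have he2m : Real.exp 1 ≤ (2:ℝ)^m := by
        have : (8:ℝ) ≤ (2:ℝ)^m := by exact_mod_cast h2m8
        have := Real.exp_one_lt_d9
        linarith
      have := Real.log_div_self_antitoneOn (by exact he2m) (by exact he2m.trans hp2m) hp2m
      simp only at this
      calc Real.log p / p ≤ Real.log (2^m) / 2^m := this
        _ = (m:ℝ) * Real.log 2 / 2^m := by rw [Real.log_pow]
    calc ∑ p ∈ S2, Real.log p / p ≤ S2.card • ((m:ℝ) * Real.log 2 / 2^m) :=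
          Finset.sum_le_card_nsmul _ _ _ hterm
      _ = (S2.card : ℝ) * ((m:ℝ) * Real.log 2 / 2^m) := by rw [nsmul_eq_mul]
      _ ≤ (m:ℝ) := by
          have hc : (S2.card : ℝ) ≤ K := by
            have : S2.card ≤ j.primeFactors.card :=
              Finset.card_le_card (Finset.filter_subset _ _)
            exact_mod_cast this.trans homega
          have h2mpos : (0:ℝ) < 2^m := by positivity
          have h4K' : 4 * (K:ℝ) ≤ 2^m := by exact_mod_cast h4K
          have hKpos : (0:ℝ) ≤ (K:ℝ) := by positivity
          have hmn : (0:ℝ) ≤ (m:ℝ) := by positivity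
          have : (S2.card : ℝ) * ((m:ℝ) * Real.log 2 / 2^m)
              ≤ (K:ℝ) * ((m:ℝ) * Real.log 2 / 2^m) := by
            apply mul_le_mul_of_nonneg_right hc
            positivity
          have h5 : (K:ℝ) * ((m:ℝ) * Real.log 2 / 2^m) ≤ (m:ℝ) := by
            rw [mul_div_assoc']
            rw [div_le_iff₀ h2mpos]
            nlinarith [mul_le_mul_of_nonneg_right h4K' hmn, mul_nonneg hKpos hmn,
              mul_nonneg hmn h2mpos.le]
          linarith
  -- conclude
  have htot : ∑ p ∈ j.primeFactors, Real.log p / p ≤ 14 * Real.log (Real.log j) + 43 := by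
    rw [hsplit]
    have : 8 * Real.log 2 * (m:ℝ) + 1 + (m:ℝ) ≤ 6.6 * (m:ℝ) + 1 := by nlinarith [(Nat.cast_nonneg m : (0:ℝ) ≤ (m:ℝ))]
    nlinarith [(Nat.cast_nonneg m : (0:ℝ) ≤ (m:ℝ))]
  have hllj_pos : 0 < Real.log (Real.log j) := lt_of_lt_of_le hll3_pos hllj_ge
  have : (43:ℝ) ≤ 43 / Real.log (Real.log 3) * Real.log (Real.log j) := by
    rw [div_mul_eq_mul_div, le_div_iff₀ hll3_pos]
    nlinarith
  nlinarith
end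

section
/- Let m ≥ 1 be an integer, α a complex number, f a continuous function on [1,∞), and D ≥ 1. Then the iterated integral ∫_1^D x_1^{-(1+α)} ∫_1^{D/x_1} x_2^{-(1+α)} ⋯ ∫_1^{D/(x_1⋯x_{m-1})} f(x_1 x_2 ⋯ x_m) x_m^{-(1+α)} dx_m ⋯ dx_1 equals ∫_1^D f(x) (log x)^{m-1} / ((m-1)! · x^{1+α}) dx. -/
open intervalIntegral

/-- The nested integral
`∫_1^D x₁^{-(1+α)} ∫_1^{D/x₁} ⋯ ∫_1^{D/(x₁⋯xₘ)} f(x₁⋯x_{m+1}) x_{m+1}^{-(1+α)} dx_{m+1} ⋯ dx₁`,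
with `m+1` integrals for the argument `m`. -/
noncomputable def nestedIntegral (α : ℂ) : ℕ → (ℝ → ℂ) → ℝ → ℂ
  | 0, f, D => ∫ x in (1:ℝ)..D, f x * (x : ℂ) ^ (-(1 + α))
  | m + 1, f, D =>
      ∫ x in (1:ℝ)..D, (x : ℂ) ^ (-(1 + α)) * nestedIntegral α m (fun y => f (x * y)) (D / x)

open MeasureTheory Set in
/-- Fubini on the triangle `1 ≤ x ≤ u ≤ D`. -/
lemma fubini_triangle {D : ℝ} (hD : 1 ≤ D) (g : ℝ → ℝ → ℂ)
    (hg : ContinuousOn (fun p : ℝ × ℝ => g p.1 p.2) (Set.Icc 1 D ×ˢ Set.Icc 1 D)) :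
    (∫ x in (1:ℝ)..D, ∫ u in x..D, g x u) = ∫ u in (1:ℝ)..D, ∫ x in (1:ℝ)..u, g x u := by
  set F : ℝ × ℝ → ℂ := ({p : ℝ × ℝ | p.1 < p.2}).indicator (fun p => g p.1 p.2) with hFdef
  have hmeas : MeasurableSet {p : ℝ × ℝ | p.1 < p.2} :=
    measurableSet_lt measurable_fst measurable_snd
  have hint : Integrable F ((volume.restrict (Set.Ioc 1 D)).prod (volume.restrict (Set.Ioc 1 D))) := by
    rw [Measure.prod_restrict]
    apply Integrable.indicator _ hmeas
    apply (hg.integrableOn_compact (isCompact_Icc.prod isCompact_Icc)).mono_set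
    exact Set.prod_mono Set.Ioc_subset_Icc_self Set.Ioc_subset_Icc_self
  have swap := MeasureTheory.integral_integral_swap
    (f := fun x u => F (x, u)) (μ := volume.restrict (Set.Ioc 1 D))
    (ν := volume.restrict (Set.Ioc 1 D)) (by exact hint)
  rw [integral_of_le hD, integral_of_le hD]
  have hleft : ∀ x ∈ Set.Ioc (1:ℝ) D,
      (∫ u in x..D, g x u) = ∫ u in Set.Ioc (1:ℝ) D, F (x, u) := by
    intro x hx
    have h1 : (fun u => F (x, u)) = Set.indicator (Set.Ioi x) (fun u => g x u) := by
      funext u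
      simp [hFdef, Set.indicator_apply, Set.mem_Ioi]
    rw [h1, MeasureTheory.integral_indicator measurableSet_Ioi,
      Measure.restrict_restrict measurableSet_Ioi]
    have h2 : Set.Ioi x ∩ Set.Ioc 1 D = Set.Ioc x D := by
      rw [Set.inter_comm, Set.Ioc_inter_Ioi, max_eq_right hx.1.le]
    rw [h2, integral_of_le hx.2]
  have hright : ∀ u ∈ Set.Ioc (1:ℝ) D,
      (∫ x in (1:ℝ)..u, g x u) = ∫ x in Set.Ioc (1:ℝ) D, F (x, u) := by
    intro u hu
    have h1 : (fun x => F (x, u)) = Set.indicator (Set.Iio u) (fun x => g x u) := by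
      funext x
      simp [hFdef, Set.indicator_apply, Set.mem_Iio]
    rw [h1, MeasureTheory.integral_indicator measurableSet_Iio,
      Measure.restrict_restrict measurableSet_Iio]
    have h2 : Set.Iio u ∩ Set.Ioc 1 D = Set.Ioo 1 u := by
      ext z
      simp only [Set.mem_inter_iff, Set.mem_Iio, Set.mem_Ioc, Set.mem_Ioo]
      constructor
      · rintro ⟨h1, h2, h3⟩; exact ⟨h2, h1⟩
      · rintro ⟨h1, h2⟩; exact ⟨h2, h1, h2.le.trans hu.2⟩
    rw [h2, ← MeasureTheory.integral_Ioc_eq_integral_Ioo, integral_of_le hu.1.le]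
  calc (∫ x in Set.Ioc (1:ℝ) D, ∫ u in x..D, g x u)
      = ∫ x in Set.Ioc (1:ℝ) D, ∫ u in Set.Ioc (1:ℝ) D, F (x, u) :=
        setIntegral_congr_fun measurableSet_Ioc fun x hx => hleft x hx
    _ = ∫ u in Set.Ioc (1:ℝ) D, ∫ x in Set.Ioc (1:ℝ) D, F (x, u) := swap
    _ = ∫ u in Set.Ioc (1:ℝ) D, ∫ x in (1:ℝ)..u, g x u :=
        setIntegral_congr_fun measurableSet_Ioc fun u hu => (hright u hu).symm

/-- `∫_1^u (log u - log x)^n / x dx = (log u)^(n+1)/(n+1)`. -/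
lemma integral_log_pow {u : ℝ} (hu : 1 ≤ u) (n : ℕ) :
    (∫ x in (1:ℝ)..u, (Real.log u - Real.log x) ^ n * x⁻¹) =
      (Real.log u) ^ (n + 1) / (n + 1) := by
  have h1 : ∀ x ∈ Set.uIcc (1:ℝ) u, HasDerivAt Real.log x⁻¹ x := by
    intro x hx
    rw [Set.uIcc_of_le hu] at hx
    exact Real.hasDerivAt_log (by linarith [hx.1])
  have h2 : ContinuousOn (fun x : ℝ => x⁻¹) (Set.uIcc 1 u) := by
    apply ContinuousOn.inv₀ continuousOn_id
    intro x hx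
    rw [Set.uIcc_of_le hu] at hx
    exact ne_of_gt (lt_of_lt_of_le one_pos hx.1)
  have h3 : Continuous fun t : ℝ => (Real.log u - t) ^ n := by continuity
  have key := integral_comp_smul_deriv h1 h2 h3
  rw [Real.log_one] at key
  have : (∫ x in (1:ℝ)..u, (Real.log u - Real.log x) ^ n * x⁻¹)
      = ∫ x in (1:ℝ)..u, x⁻¹ • ((fun t => (Real.log u - t) ^ n) ∘ Real.log) x := by
    apply integral_congr
    intro x _
    simp [mul_comm]
  rw [this, key, integral_comp_sub_left (fun t => t ^ n) (Real.log u), sub_self, sub_zero,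
    integral_pow]
  simp

lemma cpow_div_ofReal {x u : ℝ} (hx : 0 < x) (hu : 0 < u) (s : ℂ) :
    ((u / x : ℝ) : ℂ) ^ s = (u : ℂ) ^ s / (x : ℂ) ^ s := by
  rw [Complex.ofReal_div, div_eq_mul_inv, ← Complex.ofReal_inv,
    Complex.mul_cpow_ofReal_nonneg hu.le (inv_nonneg.mpr hx.le), Complex.ofReal_inv,
    Complex.inv_cpow _ _ (by
      rw [Complex.arg_ofReal_of_nonneg hx.le]
      exact Real.pi_ne_zero.symm), div_eq_mul_inv]

lemma cpow_ofReal_ne_zero {x : ℝ} (hx : 0 < x) (s : ℂ) : (x : ℂ) ^ s ≠ 0 := by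
  intro h
  rw [Complex.cpow_eq_zero_iff] at h
  exact (Complex.ofReal_ne_zero.mpr hx.ne') h.1

lemma nested_key (α : ℂ) (n : ℕ) : ∀ f : ℝ → ℂ, Continuous f → ∀ D : ℝ, 1 ≤ D →
    nestedIntegral α n f D =
      ∫ x in (1:ℝ)..D, f x * (Real.log x) ^ n / ((n.factorial : ℂ) * (x : ℂ) ^ ((1 : ℂ) + α)) := by
  induction n with
  | zero =>
    intro f hf D hD
    show (∫ x in (1:ℝ)..D, f x * (x : ℂ) ^ (-(1 + α))) = _
    apply integral_congr
    intro x _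
    simp only [pow_zero, Nat.factorial_zero, Nat.cast_one, one_mul, mul_one,
      Complex.cpow_neg, div_eq_mul_inv]
  | succ n ih =>
    intro f hf D hD
    set G : ℝ → ℝ → ℂ := fun x u =>
      f u * ((Real.log u - Real.log x : ℝ) : ℂ) ^ n /
        ((n.factorial : ℂ) * (u : ℂ) ^ ((1 : ℂ) + α) * (x : ℂ)) with hGdef
    have hfact : ((n.factorial : ℂ)) ≠ 0 := Nat.cast_ne_zero.mpr n.factorial_ne_zero
    have hGcont : ContinuousOn (fun p : ℝ × ℝ => G p.1 p.2) (Set.Icc 1 D ×ˢ Set.Icc 1 D) := by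
      apply ContinuousOn.div
      · apply ContinuousOn.mul
        · exact (hf.comp continuous_snd).continuousOn
        · apply ContinuousOn.pow
          apply Complex.continuous_ofReal.comp_continuousOn
          apply ContinuousOn.sub
          · apply ContinuousOn.log (continuous_snd.continuousOn)
            rintro ⟨x, u⟩ ⟨_, hu⟩
            exact ne_of_gt (lt_of_lt_of_le one_pos hu.1)
          · apply ContinuousOn.log (continuous_fst.continuousOn)
            rintro ⟨x, u⟩ ⟨hx, _⟩
            exact ne_of_gt (lt_of_lt_of_le one_pos hx.1)
      · apply ContinuousOn.mul
        · apply ContinuousOn.mul continuousOn_const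
          apply ContinuousOn.cpow_const
          · exact (Complex.continuous_ofReal.comp continuous_snd).continuousOn
          · rintro ⟨x, u⟩ ⟨_, hu⟩
            exact Complex.ofReal_mem_slitPlane.mpr (lt_of_lt_of_le one_pos hu.1)
        · exact (Complex.continuous_ofReal.comp continuous_fst).continuousOn
      · rintro ⟨x, u⟩ ⟨hx, hu⟩
        have hx0 : (0:ℝ) < x := lt_of_lt_of_le one_pos hx.1
        have hu0 : (0:ℝ) < u := lt_of_lt_of_le one_pos hu.1
        exact mul_ne_zero (mul_ne_zero hfact (cpow_ofReal_ne_zero hu0 _))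
          (Complex.ofReal_ne_zero.mpr hx0.ne')
    calc nestedIntegral α (n + 1) f D
        = ∫ x in (1:ℝ)..D, ∫ u in x..D, G x u := by
          show (∫ x in (1:ℝ)..D, (x : ℂ) ^ (-(1 + α)) *
              nestedIntegral α n (fun y => f (x * y)) (D / x)) = _
          apply integral_congr
          intro x hx
          rw [Set.uIcc_of_le hD] at hx
          have hx0 : (0:ℝ) < x := lt_of_lt_of_le one_pos hx.1
          have hxD : x ≤ D := hx.2
          show (x : ℂ) ^ (-(1 + α)) * nestedIntegral α n (fun y => f (x * y)) (D / x) =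
            ∫ u in x..D, G x u
          rw [ih (fun y => f (x * y)) (by fun_prop) (D / x) ((one_le_div hx0).mpr hxD)]
          have hsub := intervalIntegral.integral_comp_div (a := x) (b := D) (c := x)
            (f := fun y => f (x * y) * ((Real.log y : ℝ) : ℂ) ^ n /
              ((n.factorial : ℂ) * (y : ℂ) ^ ((1 : ℂ) + α))) hx0.ne'
          rw [div_self hx0.ne'] at hsub
          have hsub2 : (∫ y in (1:ℝ)..(D / x), f (x * y) * ((Real.log y : ℝ) : ℂ) ^ n /
              ((n.factorial : ℂ) * (y : ℂ) ^ ((1 : ℂ) + α)))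
              = (x⁻¹ : ℝ) • ∫ v in x..D, f (x * (v / x)) * ((Real.log (v / x) : ℝ) : ℂ) ^ n /
              ((n.factorial : ℂ) * ((v / x : ℝ) : ℂ) ^ ((1 : ℂ) + α)) := by
            rw [hsub, inv_smul_smul₀ hx0.ne']
          rw [hsub2, Complex.real_smul, ← mul_assoc, ← integral_const_mul]
          apply integral_congr
          intro v hv
          rw [Set.uIcc_of_le hxD] at hv
          have hv0 : (0:ℝ) < v := lt_of_lt_of_le hx0 hv.1
          have hxv : x * (v / x) = v := by field_simp
          show (x : ℂ) ^ (-(1 + α)) * ((x⁻¹ : ℝ) : ℂ) *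
              (f (x * (v / x)) * ((Real.log (v / x) : ℝ) : ℂ) ^ n /
                ((n.factorial : ℂ) * ((v / x : ℝ) : ℂ) ^ ((1 : ℂ) + α))) = G x v
          rw [hxv, Real.log_div hv0.ne' hx0.ne', cpow_div_ofReal hx0 hv0, Complex.cpow_neg,
            hGdef]
          have h1 : ((x : ℂ)) ^ ((1 : ℂ) + α) ≠ 0 := cpow_ofReal_ne_zero hx0 _
          have h2 : ((v : ℂ)) ^ ((1 : ℂ) + α) ≠ 0 := cpow_ofReal_ne_zero hv0 _
          have h3 : ((x : ℝ) : ℂ) ≠ 0 := Complex.ofReal_ne_zero.mpr hx0.ne'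
          push_cast
          field_simp
      _ = ∫ u in (1:ℝ)..D, ∫ x in (1:ℝ)..u, G x u := fubini_triangle hD G hGcont
      _ = ∫ u in (1:ℝ)..D, f u * (Real.log u) ^ (n + 1) /
            (((n + 1).factorial : ℂ) * (u : ℂ) ^ ((1 : ℂ) + α)) := by
          apply integral_congr
          intro u hu
          rw [Set.uIcc_of_le hD] at hu
          show (∫ x in (1:ℝ)..u, G x u) = f u * (Real.log u) ^ (n + 1) /
            (((n + 1).factorial : ℂ) * (u : ℂ) ^ ((1 : ℂ) + α))
          have hu1 : (1:ℝ) ≤ u := hu.1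
          have hu0 : (0:ℝ) < u := lt_of_lt_of_le one_pos hu1
          have h2 : ((u : ℂ)) ^ ((1 : ℂ) + α) ≠ 0 := cpow_ofReal_ne_zero hu0 _
          have hpt : ∀ x ∈ Set.uIcc (1:ℝ) u, G x u =
              (f u / ((n.factorial : ℂ) * (u : ℂ) ^ ((1 : ℂ) + α))) *
                (((Real.log u - Real.log x) ^ n * x⁻¹ : ℝ) : ℂ) := by
            intro x hx
            rw [Set.uIcc_of_le hu1] at hx
            have hx0 : (0:ℝ) < x := lt_of_lt_of_le one_pos hx.1
            have h3 : ((x : ℝ) : ℂ) ≠ 0 := Complex.ofReal_ne_zero.mpr hx0.ne'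
            rw [hGdef]
            push_cast
            field_simp
          have hfe : (((n+1).factorial : ℂ)) = ((n:ℂ) + 1) * (n.factorial : ℂ) := by
            push_cast [Nat.factorial_succ]
            ring
          rw [integral_congr hpt, integral_const_mul, intervalIntegral.integral_ofReal,
            integral_log_pow hu1 n, hfe]
          have h5 : ((n : ℂ) + 1) ≠ 0 := Nat.cast_add_one_ne_zero n
          push_cast
          field_simp

theorem nested_integral_eq (m : ℕ) (hm : 1 ≤ m) (α : ℂ) (f : ℝ → ℂ)
    (hf : Continuous f) (D : ℝ) (hD : 1 ≤ D) :
    nestedIntegral α (m - 1) f D =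
      ∫ x in (1:ℝ)..D,
        f x * (Real.log x) ^ (m - 1) / ((m - 1).factorial * (x : ℂ) ^ ((1 : ℂ) + α)) := by
  exact nested_key α (m - 1) f hf D hD
end

section
/- Let j be a square-free positive integer and m₁, m₂ positive integers. Then (∑_{p₁⋯p_{m₁} | j} log p₁ ⋯ log p_{m₁}) · (∑_{q₁⋯q_{m₂} | j} log q₁ ⋯ log q_{m₂}) = ∑_{k=0}^{min(m₁,m₂)} k! · C(m₁,k) · C(m₂,k) · ∑_{p₁⋯p_{m₁+m₂-k} | j} (log p₁)² ⋯ (log p_k)² · log p_{k+1} ⋯ log p_{m₁+m₂-k}, where each inner sum ranges over ordered tuples of distinct primes whose product divides j. -/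
open Finset

/-- The set of ordered `m`-tuples of distinct primes whose product divides `j`. -/
noncomputable def primeTuples (j m : ℕ) : Finset (Fin m → ℕ) :=
  (Fintype.piFinset fun _ : Fin m => Finset.range (j + 1)).filter
    (fun p => (∀ i, (p i).Prime) ∧ Function.Injective p ∧ (∏ i, p i) ∣ j)

/-- `∑_{p₁⋯p_m | j} log p₁ ⋯ log p_m`, over ordered tuples of distinct primes. -/
noncomputable def primeLogSum (j m : ℕ) : ℝ :=
  ∑ p ∈ primeTuples j m, ∏ i, Real.log (p i)

/-- `∑_{p₁⋯p_m | j} (log p₁)² ⋯ (log p_k)² log p_{k+1} ⋯ log p_m`, over ordered tuples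
of distinct primes, where the first `k` logarithms are squared. -/
noncomputable def primeLogSqSum (j m k : ℕ) : ℝ :=
  ∑ p ∈ primeTuples j m, ∏ i : Fin m, (if (i : ℕ) < k then (Real.log (p i)) ^ 2 else Real.log (p i))

def Injs (m : ℕ) (P : Finset ℕ) : Finset (Fin m → ℕ) :=
  (Fintype.piFinset fun _ : Fin m => P).filter Function.Injective

lemma mem_Injs {m : ℕ} {P : Finset ℕ} {f : Fin m → ℕ} :
    f ∈ Injs m P ↔ (∀ i, f i ∈ P) ∧ Function.Injective f := by
  simp [Injs, Fintype.mem_piFinset]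

lemma sum_injs_succ (P : Finset ℕ) (m : ℕ) (H : (Fin (m+1) → ℕ) → ℝ) :
    ∑ f ∈ Injs (m+1) P, H f = ∑ x ∈ P, ∑ f ∈ Injs m (P.erase x), H (Fin.cons x f) := by
  rw [Finset.sum_sigma']
  refine Finset.sum_nbij' (fun f => ⟨f 0, Fin.tail f⟩) (fun p => Fin.cons p.1 p.2) ?_ ?_ ?_ ?_ ?_
  · intro f hf
    rw [mem_Injs] at hf
    obtain ⟨hmem, hinj⟩ := hf
    refine Finset.mem_sigma.mpr ⟨hmem 0, mem_Injs.mpr ⟨fun i => ?_, ?_⟩⟩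
    · exact Finset.mem_erase.mpr ⟨fun h => Fin.succ_ne_zero i (hinj h), hmem i.succ⟩
    · exact fun a b h => Fin.succ_injective _ (hinj h)
  · rintro ⟨x, f⟩ hp
    rw [Finset.mem_sigma, mem_Injs] at hp
    obtain ⟨hx, hmem, hinj⟩ := hp
    refine mem_Injs.mpr ⟨fun i => ?_, Fin.cons_injective_iff.mpr ⟨?_, hinj⟩⟩
    · refine Fin.cases ?_ (fun i => ?_) i
      · simpa using hx
      · simpa using Finset.mem_of_mem_erase (hmem i)
    · rintro ⟨i, hi⟩
      exact (Finset.mem_erase.mp (hmem i)).1 hi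
  · intro f _; exact Fin.cons_self_tail f
  · rintro ⟨x, f⟩ _
    simp [Fin.tail_cons]
  · intro f _
    rw [Fin.cons_self_tail]

lemma insert_sum (P : Finset ℕ) (m : ℕ) (F : ℕ → Finset ℕ → ℝ) :
    ∑ x ∈ P, ∑ A ∈ (P.erase x).powersetCard m, F x A
      = ∑ B ∈ P.powersetCard (m+1), ∑ x ∈ B, F x (B.erase x) := by
  rw [Finset.sum_sigma', Finset.sum_sigma']
  refine Finset.sum_nbij' (fun p => ⟨insert p.1 p.2, p.1⟩) (fun q => ⟨q.2, q.1.erase q.2⟩)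
    ?_ ?_ ?_ ?_ ?_
  · rintro ⟨x, A⟩ hp
    rw [Finset.mem_sigma, Finset.mem_powersetCard] at hp
    obtain ⟨hx, hA, hcard⟩ := hp
    have hxA : x ∉ A := fun h => (Finset.mem_erase.mp (hA h)).1 rfl
    refine Finset.mem_sigma.mpr ⟨Finset.mem_powersetCard.mpr ⟨?_, ?_⟩, Finset.mem_insert_self _ _⟩
    · exact Finset.insert_subset hx (hA.trans (Finset.erase_subset _ _))
    · rw [Finset.card_insert_of_notMem hxA, hcard]
  · rintro ⟨B, x⟩ hq
    rw [Finset.mem_sigma, Finset.mem_powersetCard] at hq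
    obtain ⟨⟨hB, hcard⟩, hx⟩ := hq
    refine Finset.mem_sigma.mpr ⟨hB hx, Finset.mem_powersetCard.mpr ⟨?_, ?_⟩⟩
    · exact fun a ha => Finset.mem_erase.mpr ⟨(Finset.mem_erase.mp ha).1,
        hB (Finset.mem_of_mem_erase ha)⟩
    · rw [Finset.card_erase_of_mem hx, hcard]; rfl
  · rintro ⟨x, A⟩ hp
    rw [Finset.mem_sigma, Finset.mem_powersetCard] at hp
    have hxA : x ∉ A := fun h => (Finset.mem_erase.mp (hp.2.1 h)).1 rfl
    simp [Finset.erase_insert hxA]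
  · rintro ⟨B, x⟩ hq
    rw [Finset.mem_sigma] at hq
    simp [Finset.insert_erase hq.2]
  · rintro ⟨x, A⟩ hp
    rw [Finset.mem_sigma, Finset.mem_powersetCard] at hp
    have hxA : x ∉ A := fun h => (Finset.mem_erase.mp (hp.2.1 h)).1 rfl
    simp [Finset.erase_insert hxA]

lemma image_cons (x : ℕ) {m : ℕ} (f : Fin m → ℕ) :
    Finset.image (Fin.cons x f) Finset.univ = insert x (Finset.image f Finset.univ) := by
  ext y
  simp only [Finset.mem_image, Finset.mem_insert, Finset.mem_univ, true_and]
  constructor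
  · rintro ⟨i, rfl⟩
    refine Fin.cases ?_ (fun i => ?_) i
    · left; rfl
    · right; exact ⟨i, rfl⟩
  · rintro (rfl | ⟨i, rfl⟩)
    · exact ⟨0, rfl⟩
    · exact ⟨i.succ, rfl⟩

lemma sum_injs (F : Finset ℕ → ℝ) (m : ℕ) (P : Finset ℕ) :
    ∑ f ∈ Injs m P, F (Finset.image f Finset.univ)
      = (m.factorial : ℝ) * ∑ A ∈ P.powersetCard m, F A := by
  induction m generalizing F P with
  | zero =>
    have h : Injs 0 P = Finset.univ :=
      Finset.eq_univ_of_forall (fun f => mem_Injs.mpr ⟨fun i => i.elim0, fun a b _ => Subsingleton.elim a b⟩)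
    rw [h]
    simp
  | succ m ih =>
    rw [sum_injs_succ]
    have h1 : ∀ x ∈ P, ∑ f ∈ Injs m (P.erase x), F (Finset.image (Fin.cons x f) Finset.univ)
        = (m.factorial : ℝ) * ∑ A ∈ (P.erase x).powersetCard m, F (insert x A) := by
      intro x _
      rw [← ih (fun A => F (insert x A)) (P.erase x)]
      exact Finset.sum_congr rfl fun f _ => by rw [image_cons]
    rw [Finset.sum_congr rfl h1, ← Finset.mul_sum, insert_sum P m (fun x A => F (insert x A))]
    have h2 : ∀ B ∈ P.powersetCard (m+1), ∑ x ∈ B, F (insert x (B.erase x)) = ((m+1 : ℕ) : ℝ) * F B := by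
      intro B hB
      have hc := (Finset.mem_powersetCard.mp hB).2
      rw [Finset.sum_congr rfl (fun x hx => by rw [Finset.insert_erase hx]),
        Finset.sum_const, hc]
      simp
    rw [Finset.sum_congr rfl h2, ← Finset.mul_sum, Nat.factorial_succ]
    push_cast
    ring

lemma injs_split (P : Finset ℕ) (k r : ℕ) (g₂ g : ℕ → ℝ) :
    ∑ f ∈ Injs (k+r) P, (∏ i : Fin (k+r), if (i:ℕ) < k then g₂ (f i) else g (f i))
      = ∑ a ∈ Injs k P, (∏ i, g₂ (a i)) *
          ∑ b ∈ Injs r (P \ Finset.image a Finset.univ), ∏ i, g (b i) := by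
  have hmul : ∀ a ∈ Injs k P, (∏ i, g₂ (a i)) *
          ∑ b ∈ Injs r (P \ Finset.image a Finset.univ), ∏ i, g (b i)
        = ∑ b ∈ Injs r (P \ Finset.image a Finset.univ),
            (∏ i, g₂ (a i)) * ∏ i, g (b i) := fun a _ => Finset.mul_sum _ _ _
  rw [Finset.sum_congr rfl hmul, Finset.sum_sigma']
  clear hmul
  refine Finset.sum_nbij'
    (fun f => ⟨fun i => f (Fin.castAdd r i), fun i => f (Fin.natAdd k i)⟩)
    (fun p => Fin.append p.1 p.2) ?_ ?_ ?_ ?_ ?_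
  · intro f hf
    rw [mem_Injs] at hf
    obtain ⟨hmem, hinj⟩ := hf
    refine Finset.mem_sigma.mpr ⟨mem_Injs.mpr ⟨fun i => hmem (Fin.castAdd r i), ?_⟩,
      mem_Injs.mpr ⟨?_, ?_⟩⟩
    · exact fun a b h => by
        have := hinj h
        exact Fin.castAdd_injective _ _ this
    · intro i
      refine Finset.mem_sdiff.mpr ⟨hmem (Fin.natAdd k i), ?_⟩
      intro hmem2
      obtain ⟨i2, _, hi2⟩ := Finset.mem_image.mp hmem2
      have := hinj hi2
      have h1 : ((Fin.castAdd r i2 : Fin (k+r)) : ℕ) = (i2 : ℕ) := rfl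
      have h2 : ((Fin.natAdd k i : Fin (k+r)) : ℕ) = k + (i : ℕ) := rfl
      rw [this] at h1
      rw [h1] at h2
      clear * - h1 h2
      omega
    · intro a b h
      have h2 := hinj h
      have h3 := congrArg Fin.val h2
      simp only [Fin.coe_natAdd] at h3
      clear * - h3
      exact Fin.ext (by omega)
  · rintro ⟨a, b⟩ hp
    rw [Finset.mem_sigma, mem_Injs, mem_Injs] at hp
    obtain ⟨⟨hma, hia⟩, hmb, hib⟩ := hp
    dsimp only at hma hia hmb hib ⊢
    refine mem_Injs.mpr ⟨fun i => ?_, ?_⟩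
    · refine Fin.addCases (fun i => ?_) (fun i => ?_) i
      · rw [Fin.append_left]; exact hma i
      · rw [Fin.append_right]; exact (Finset.mem_sdiff.mp (hmb i)).1
    · intro i1 i2
      refine Fin.addCases (fun j1 => ?_) (fun j1 => ?_) i1 <;>
        refine Fin.addCases (fun j2 => ?_) (fun j2 => ?_) i2 <;> intro h
      · rw [Fin.append_left, Fin.append_left] at h
        exact congrArg _ (hia h)
      · rw [Fin.append_left, Fin.append_right] at h
        exact absurd (Finset.mem_image.mpr ⟨j1, Finset.mem_univ _, h⟩)
          (Finset.mem_sdiff.mp (hmb j2)).2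
      · rw [Fin.append_right, Fin.append_left] at h
        exact absurd (Finset.mem_image.mpr ⟨j2, Finset.mem_univ _, h.symm⟩)
          (Finset.mem_sdiff.mp (hmb j1)).2
      · rw [Fin.append_right, Fin.append_right] at h
        exact congrArg _ (hib h)
  · intro f _
    exact funext fun i => Fin.addCases (fun j => Fin.append_left _ _ j)
      (fun j => Fin.append_right _ _ j) i
  · rintro ⟨a, b⟩ _
    have h1 : (fun i => Fin.append a b (Fin.castAdd r i)) = a :=
      funext fun i => Fin.append_left _ _ i
    have h2 : (fun i => Fin.append a b (Fin.natAdd k i)) = b :=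
      funext fun i => Fin.append_right _ _ i
    simp only [h1, h2]
  · intro f _
    rw [Fin.prod_univ_add]
    congr 1
    · refine Finset.prod_congr rfl fun i _ => ?_
      rw [if_pos]
      exact i.isLt
    · refine Finset.prod_congr rfl fun i _ => ?_
      rw [if_neg]
      simp

lemma primeTuples_eq (j m : ℕ) (hj : Squarefree j) :
    primeTuples j m = Injs m j.primeFactors := by
  have hj0 : j ≠ 0 := hj.ne_zero
  ext f
  simp only [primeTuples, mem_Injs, Finset.mem_filter, Fintype.mem_piFinset,
    Finset.mem_range, Nat.mem_primeFactors]
  constructor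
  · rintro ⟨hb, hp, hinj, hdvd⟩
    exact ⟨fun i => ⟨hp i, (Finset.dvd_prod_of_mem _ (Finset.mem_univ i)).trans hdvd, hj0⟩, hinj⟩
  · rintro ⟨hmem, hinj⟩
    have hprod : (∏ i, f i) ∣ j := by
      have himg : (∏ p ∈ Finset.image f Finset.univ, p) = ∏ i, f i :=
        Finset.prod_image (fun a _ b _ h => hinj h)
      rw [← himg]
      refine Finset.prod_primes_dvd _ (fun p hp => ?_) (fun p hp => ?_)
      · obtain ⟨i, _, rfl⟩ := Finset.mem_image.mp hp
        exact (hmem i).1.prime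
      · obtain ⟨i, _, rfl⟩ := Finset.mem_image.mp hp
        exact (hmem i).2.1
    refine ⟨fun i => ?_, fun i => (hmem i).1, hinj, hprod⟩
    exact Nat.lt_succ_of_le (Nat.le_of_dvd (Nat.pos_of_ne_zero hj0) (hmem i).2.1)

lemma primeLogSum_eq (j : ℕ) (hj : Squarefree j) (m : ℕ) :
    primeLogSum j m = (m.factorial : ℝ) *
      ∑ A ∈ j.primeFactors.powersetCard m, ∏ x ∈ A, Real.log x := by
  rw [primeLogSum, primeTuples_eq j m hj]
  have h : ∀ f ∈ Injs m j.primeFactors, (∏ i, Real.log (f i))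
      = ∏ x ∈ Finset.image f Finset.univ, Real.log x := fun f hf =>
    (Finset.prod_image (f := fun n : ℕ => Real.log n) (fun a _ b _ h => (mem_Injs.mp hf).2 h)).symm
  rw [Finset.sum_congr rfl h, sum_injs (fun A => ∏ x ∈ A, Real.log x) m]

lemma primeLogSqSum_eq (j : ℕ) (hj : Squarefree j) (k r : ℕ) :
    primeLogSqSum j (k+r) k = (k.factorial : ℝ) * (r.factorial : ℝ) *
      ∑ A ∈ j.primeFactors.powersetCard k, (∏ x ∈ A, (Real.log x)^2) *
        ∑ B ∈ (j.primeFactors \ A).powersetCard r, ∏ x ∈ B, Real.log x := by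
  rw [primeLogSqSum, primeTuples_eq _ _ hj,
    injs_split j.primeFactors k r (fun x : ℕ => (Real.log x)^2) (fun x : ℕ => Real.log x)]
  have step1 : ∀ a ∈ Injs k j.primeFactors,
      (∏ i, (Real.log (a i))^2) *
        ∑ b ∈ Injs r (j.primeFactors \ Finset.image a Finset.univ), ∏ i, Real.log (b i)
      = (∏ x ∈ Finset.image a Finset.univ, (Real.log x)^2) *
          ((r.factorial : ℝ) *
            ∑ B ∈ (j.primeFactors \ Finset.image a Finset.univ).powersetCard r,
              ∏ x ∈ B, Real.log x) := by
    intro a ha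
    have hin : ∑ b ∈ Injs r (j.primeFactors \ Finset.image a Finset.univ), ∏ i, Real.log (b i)
        = (r.factorial : ℝ) * ∑ B ∈ (j.primeFactors \ Finset.image a Finset.univ).powersetCard r,
            ∏ x ∈ B, Real.log x := by
      rw [← sum_injs (fun B => ∏ x ∈ B, Real.log x) r]
      exact Finset.sum_congr rfl fun b hb =>
        (Finset.prod_image (f := fun n : ℕ => Real.log n) (fun x _ y _ h => (mem_Injs.mp hb).2 h)).symm
    have hsq : (∏ i, (Real.log (a i))^2)
        = ∏ x ∈ Finset.image a Finset.univ, (Real.log x)^2 :=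
      (Finset.prod_image (f := fun n : ℕ => (Real.log n)^2) (fun x _ y _ h => (mem_Injs.mp ha).2 h)).symm
    rw [hin, hsq]
  rw [Finset.sum_congr rfl step1,
    sum_injs (fun A => (∏ x ∈ A, (Real.log x)^2) *
      ((r.factorial : ℝ) * ∑ B ∈ (j.primeFactors \ A).powersetCard r, ∏ x ∈ B, Real.log x)) k,
    Finset.mul_sum, Finset.mul_sum]
  exact Finset.sum_congr rfl fun A _ => by ring

lemma core_id (P : Finset ℕ) (v : ℕ → ℝ) (m₁ m₂ : ℕ) :
    (∑ A₁ ∈ P.powersetCard m₁, ∏ x ∈ A₁, v x) * (∑ A₂ ∈ P.powersetCard m₂, ∏ x ∈ A₂, v x)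
      = ∑ k ∈ Finset.range (min m₁ m₂ + 1), ((m₁+m₂-2*k).choose (m₁-k) : ℝ) *
          ∑ A ∈ P.powersetCard k, (∏ x ∈ A, (v x)^2) *
            ∑ B ∈ (P \ A).powersetCard (m₁+m₂-2*k), ∏ x ∈ B, v x := by
  rw [Finset.sum_mul_sum]
  rw [← Finset.sum_product' (s := P.powersetCard m₁) (t := P.powersetCard m₂)
    (f := fun A₁ A₂ => (∏ x ∈ A₁, v x) * ∏ x ∈ A₂, v x)]
  have hmaps : ∀ p ∈ P.powersetCard m₁ ×ˢ P.powersetCard m₂,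
      (p.1 ∩ p.2).card ∈ Finset.range (min m₁ m₂ + 1) := by
    rintro ⟨A₁, A₂⟩ hp
    rw [Finset.mem_product, Finset.mem_powersetCard, Finset.mem_powersetCard] at hp
    rw [Finset.mem_range, Nat.lt_succ_iff, le_min_iff]
    constructor
    · rw [← hp.1.2]; exact Finset.card_le_card Finset.inter_subset_left
    · rw [← hp.2.2]; exact Finset.card_le_card Finset.inter_subset_right
  rw [← Finset.sum_fiberwise_of_maps_to hmaps]
  refine Finset.sum_congr rfl fun k hk => ?_
  rw [Finset.mem_range, Nat.lt_succ_iff, le_min_iff] at hk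
  obtain ⟨hk1, hk2⟩ := hk
  -- triple sigma
  have hR : ∀ {A B : Finset ℕ}, A.card = k → B.card = m₁+m₂-2*k → True := fun _ _ => trivial
  trans ∑ q ∈ (P.powersetCard k).sigma (fun A => ((P \ A).powersetCard (m₁+m₂-2*k)).sigma
      (fun B => B.powersetCard (m₁-k))), (∏ x ∈ q.1, (v x)^2) * ∏ x ∈ q.2.1, v x
  · refine Finset.sum_nbij' (fun p => ⟨p.1 ∩ p.2, (p.1 ∪ p.2) \ (p.1 ∩ p.2), p.1 \ p.2⟩)
      (fun q => (q.1 ∪ q.2.2, q.1 ∪ (q.2.1 \ q.2.2))) ?_ ?_ ?_ ?_ ?_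
    · rintro ⟨A₁, A₂⟩ hp
      rw [Finset.mem_filter, Finset.mem_product, Finset.mem_powersetCard,
        Finset.mem_powersetCard] at hp
      obtain ⟨⟨⟨hs1, hc1⟩, hs2, hc2⟩, hck⟩ := hp
      dsimp only at hs1 hc1 hs2 hc2 hck ⊢
      have hiu : A₁ ∩ A₂ ⊆ A₁ ∪ A₂ := Finset.inter_subset_left.trans Finset.subset_union_left
      have hcu : (A₁ ∪ A₂).card = m₁ + m₂ - k := by
        have := Finset.card_union_add_card_inter A₁ A₂
        omega
      refine Finset.mem_sigma.mpr ⟨Finset.mem_powersetCard.mpr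
        ⟨Finset.inter_subset_left.trans hs1, hck⟩, Finset.mem_sigma.mpr
        ⟨Finset.mem_powersetCard.mpr ⟨?_, ?_⟩, Finset.mem_powersetCard.mpr ⟨?_, ?_⟩⟩⟩
      · intro x hx
        rw [Finset.mem_sdiff] at hx ⊢
        rcases Finset.mem_union.mp hx.1 with h | h
        · exact ⟨hs1 h, hx.2⟩
        · exact ⟨hs2 h, hx.2⟩
      · rw [Finset.card_sdiff_of_subset hiu, hcu, hck]; omega
      · intro x hx
        rw [Finset.mem_sdiff] at hx ⊢
        rw [Finset.mem_inter]
        exact ⟨Finset.mem_union_left _ hx.1, fun h => hx.2 h.2⟩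
      · show (A₁ \ A₂).card = m₁ - k
        have := Finset.card_inter_add_card_sdiff A₁ A₂
        omega
    · rintro ⟨A, B, C⟩ hq
      rw [Finset.mem_sigma, Finset.mem_sigma, Finset.mem_powersetCard,
        Finset.mem_powersetCard, Finset.mem_powersetCard] at hq
      obtain ⟨⟨hAP, hAc⟩, ⟨hBP, hBc⟩, hCB, hCc⟩ := hq
      dsimp only at hAP hAc hBP hBc hCB hCc ⊢
      have hBA : ∀ x ∈ B, x ∉ A := fun x hx => (Finset.mem_sdiff.mp (hBP hx)).2
      have hdAC : Disjoint A C := Finset.disjoint_left.mpr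
        (fun x hx hx2 => hBA x (hCB hx2) hx)
      have hdAB : Disjoint A (B \ C) := Finset.disjoint_left.mpr
        (fun x hx hx2 => hBA x (Finset.mem_sdiff.mp hx2).1 hx)
      rw [Finset.mem_filter, Finset.mem_product, Finset.mem_powersetCard,
        Finset.mem_powersetCard]
      have hint : (A ∪ C) ∩ (A ∪ (B \ C)) = A := by
        ext x
        simp only [Finset.mem_inter, Finset.mem_union, Finset.mem_sdiff]
        constructor
        · rintro ⟨h1 | h1, h2 | h2⟩
          · exact h1
          · exact h1
          · exact h2
          · exact absurd h1 h2.2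
        · intro h; exact ⟨Or.inl h, Or.inl h⟩
      refine ⟨⟨⟨?_, ?_⟩, ?_, ?_⟩, ?_⟩
      · exact Finset.union_subset hAP ((hCB.trans (fun x hx => (Finset.mem_sdiff.mp (hBP hx)).1)))
      · rw [Finset.card_union_of_disjoint hdAC, hAc, hCc]; omega
      · exact Finset.union_subset hAP
          ((Finset.sdiff_subset).trans (fun x hx => (Finset.mem_sdiff.mp (hBP hx)).1))
      · rw [Finset.card_union_of_disjoint hdAB, hAc, Finset.card_sdiff_of_subset hCB, hBc, hCc]; omega
      · rw [hint, hAc]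
    · rintro ⟨A₁, A₂⟩ hp
      rw [Finset.mem_filter, Finset.mem_product] at hp
      have e1 : (A₁ ∩ A₂) ∪ (A₁ \ A₂) = A₁ := by
        ext x
        simp only [Finset.mem_union, Finset.mem_inter, Finset.mem_sdiff]
        tauto
      have e2 : (A₁ ∩ A₂) ∪ (((A₁ ∪ A₂) \ (A₁ ∩ A₂)) \ (A₁ \ A₂)) = A₂ := by
        ext x
        simp only [Finset.mem_union, Finset.mem_inter, Finset.mem_sdiff]
        by_cases h1 : x ∈ A₁ <;> by_cases h2 : x ∈ A₂ <;> simp [h1, h2]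
      simp only [Prod.mk.injEq]
      exact ⟨e1, e2⟩
    · rintro ⟨A, B, C⟩ hq
      rw [Finset.mem_sigma, Finset.mem_sigma, Finset.mem_powersetCard,
        Finset.mem_powersetCard, Finset.mem_powersetCard] at hq
      obtain ⟨⟨hAP, hAc⟩, ⟨hBP, hBc⟩, hCB, hCc⟩ := hq
      have hBA : ∀ x ∈ B, x ∉ A := fun x hx => (Finset.mem_sdiff.mp (hBP hx)).2
      have e1 : (A ∪ C) ∩ (A ∪ (B \ C)) = A := by
        ext x
        simp only [Finset.mem_inter, Finset.mem_union, Finset.mem_sdiff]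
        constructor
        · rintro ⟨h1 | h1, h2 | h2⟩
          · exact h1
          · exact h1
          · exact h2
          · exact absurd h1 h2.2
        · intro h; exact ⟨Or.inl h, Or.inl h⟩
      have e2 : ((A ∪ C) ∪ (A ∪ (B \ C))) \ ((A ∪ C) ∩ (A ∪ (B \ C))) = B := by
        rw [e1]
        ext x
        simp only [Finset.mem_sdiff, Finset.mem_union]
        constructor
        · rintro ⟨(h1 | h1) | (h1 | h1), h2⟩
          · exact absurd h1 h2
          · exact hCB h1
          · exact absurd h1 h2
          · exact h1.1
        · intro h
          by_cases hc : x ∈ C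
          · exact ⟨Or.inl (Or.inr hc), hBA x h⟩
          · exact ⟨Or.inr (Or.inr ⟨h, hc⟩), hBA x h⟩
      have e3 : (A ∪ C) \ (A ∪ (B \ C)) = C := by
        ext x
        simp only [Finset.mem_sdiff, Finset.mem_union, not_or]
        constructor
        · rintro ⟨h1 | h1, h2, h3⟩
          · exact absurd h1 h2
          · exact h1
        · intro h
          refine ⟨Or.inr h, fun hA => hBA x (hCB h) hA, fun hBC => hBC.2 h⟩
      dsimp only
      rw [e2, e3, e1]
    · rintro ⟨A₁, A₂⟩ hp
      dsimp only
      have hsub1 : A₁ ∩ A₂ ⊆ A₁ := Finset.inter_subset_left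
      have hsub2 : A₁ ∩ A₂ ⊆ A₂ := Finset.inter_subset_right
      have h1 : ∏ x ∈ A₁, v x = (∏ x ∈ A₁ \ A₂, v x) * ∏ x ∈ A₁ ∩ A₂, v x := by
        rw [← Finset.sdiff_inter_self_left A₁ A₂]
        exact (Finset.prod_sdiff hsub1).symm
      have h2 : ∏ x ∈ A₂, v x = (∏ x ∈ A₂ \ A₁, v x) * ∏ x ∈ A₁ ∩ A₂, v x := by
        rw [← Finset.sdiff_inter_self_right A₂ A₁]
        exact (Finset.prod_sdiff hsub2).symm
      have e : (A₁ ∪ A₂) \ (A₁ ∩ A₂) = (A₁ \ A₂) ∪ (A₂ \ A₁) := by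
        ext x
        simp only [Finset.mem_sdiff, Finset.mem_union, Finset.mem_inter]
        tauto
      have h3 : ∏ x ∈ (A₁ ∪ A₂) \ (A₁ ∩ A₂), v x
          = (∏ x ∈ A₁ \ A₂, v x) * ∏ x ∈ A₂ \ A₁, v x := by
        rw [e, Finset.prod_union disjoint_sdiff_sdiff]
      have h4 : ∏ x ∈ A₁ ∩ A₂, (v x)^2 = (∏ x ∈ A₁ ∩ A₂, v x) * ∏ x ∈ A₁ ∩ A₂, v x := by
        rw [← Finset.prod_mul_distrib]
        exact Finset.prod_congr rfl fun x _ => sq (v x)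
      rw [h1, h2, h3, h4]
      ring
  · rw [Finset.sum_sigma]
    rw [Finset.mul_sum]
    refine Finset.sum_congr rfl fun A hA => ?_
    rw [Finset.sum_sigma, Finset.mul_sum]
    dsimp only
    rw [Finset.mul_sum]
    refine Finset.sum_congr rfl fun B hB => ?_
    rw [Finset.sum_const, nsmul_eq_mul, Finset.card_powersetCard,
      (Finset.mem_powersetCard.mp hB).2]

lemma core_id' (P : Finset ℕ) (m₁ m₂ : ℕ) :
    (∑ A₁ ∈ P.powersetCard m₁, ∏ x ∈ A₁, Real.log x) *
        (∑ A₂ ∈ P.powersetCard m₂, ∏ x ∈ A₂, Real.log x)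
      = ∑ k ∈ Finset.range (min m₁ m₂ + 1), ((m₁+m₂-2*k).choose (m₁-k) : ℝ) *
          ∑ A ∈ P.powersetCard k, (∏ x ∈ A, (Real.log x)^2) *
            ∑ B ∈ (P \ A).powersetCard (m₁+m₂-2*k), ∏ x ∈ B, Real.log x :=
  core_id P (fun x : ℕ => Real.log x) m₁ m₂

lemma coeff_eq {k m₁ m₂ : ℕ} (h1 : k ≤ m₁) (h2 : k ≤ m₂) :
    m₁.factorial * m₂.factorial * (m₁+m₂-2*k).choose (m₁-k)
      = k.factorial * m₁.choose k * m₂.choose k * (k.factorial * (m₁+m₂-2*k).factorial) := by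
  have c1 := Nat.choose_mul_factorial_mul_factorial h1
  have c2 := Nat.choose_mul_factorial_mul_factorial h2
  have hr : m₁+m₂-2*k = (m₁-k) + (m₂-k) := by omega
  have c3 : (m₁+m₂-2*k).choose (m₁-k) * (m₁-k).factorial * (m₂-k).factorial
      = (m₁+m₂-2*k).factorial := by
    have h := Nat.choose_mul_factorial_mul_factorial
      (Nat.le_add_right (m₁-k) (m₂-k))
    rw [Nat.add_sub_cancel_left] at h
    rw [hr]
    exact h
  apply Nat.eq_of_mul_eq_mul_right
    (Nat.mul_pos (Nat.factorial_pos (m₁-k)) (Nat.factorial_pos (m₂-k)))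
  calc m₁.factorial * m₂.factorial * (m₁+m₂-2*k).choose (m₁-k)
        * ((m₁-k).factorial * (m₂-k).factorial)
      = m₁.factorial * m₂.factorial *
          ((m₁+m₂-2*k).choose (m₁-k) * (m₁-k).factorial * (m₂-k).factorial) := by ring
    _ = m₁.factorial * m₂.factorial * (m₁+m₂-2*k).factorial := by rw [c3]
    _ = (m₁.choose k * k.factorial * (m₁-k).factorial) *
          (m₂.choose k * k.factorial * (m₂-k).factorial) * (m₁+m₂-2*k).factorial := by
        rw [c1, c2]
    _ = k.factorial * m₁.choose k * m₂.choose k * (k.factorial * (m₁+m₂-2*k).factorial)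
          * ((m₁-k).factorial * (m₂-k).factorial) := by ring

theorem primeLogSum_mul_primeLogSum (j : ℕ) (hj : Squarefree j) (m₁ m₂ : ℕ)
    (hm₁ : 1 ≤ m₁) (hm₂ : 1 ≤ m₂) :
    primeLogSum j m₁ * primeLogSum j m₂ =
      ∑ k ∈ Finset.range (min m₁ m₂ + 1),
        (k.factorial : ℝ) * (m₁.choose k) * (m₂.choose k) *
          primeLogSqSum j (m₁ + m₂ - k) k := by
  rw [primeLogSum_eq j hj m₁, primeLogSum_eq j hj m₂]
  rw [show ((m₁.factorial : ℝ) * ∑ A ∈ j.primeFactors.powersetCard m₁, ∏ x ∈ A, Real.log x) *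
      ((m₂.factorial : ℝ) * ∑ A ∈ j.primeFactors.powersetCard m₂, ∏ x ∈ A, Real.log x)
      = (m₁.factorial : ℝ) * m₂.factorial *
        ((∑ A ∈ j.primeFactors.powersetCard m₁, ∏ x ∈ A, Real.log x) *
         (∑ A ∈ j.primeFactors.powersetCard m₂, ∏ x ∈ A, Real.log x)) from by ring,
    core_id' j.primeFactors m₁ m₂, Finset.mul_sum]
  refine Finset.sum_congr rfl fun k hk => ?_
  rw [Finset.mem_range, Nat.lt_succ_iff, le_min_iff] at hk
  obtain ⟨h1, h2⟩ := hk
  have hn : m₁ + m₂ - k = k + (m₁ + m₂ - 2*k) := by omega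
  rw [hn, primeLogSqSum_eq j hj k (m₁+m₂-2*k)]
  have hc : (m₁.factorial : ℝ) * m₂.factorial * ((m₁+m₂-2*k).choose (m₁-k))
      = (k.factorial : ℝ) * (m₁.choose k) * (m₂.choose k) *
        ((k.factorial : ℝ) * ((m₁+m₂-2*k).factorial)) := by
    exact_mod_cast congrArg (Nat.cast (R := ℝ)) (coeff_eq h1 h2)
  linear_combination (∑ A ∈ j.primeFactors.powersetCard k, (∏ x ∈ A, (Real.log x)^2) *
    ∑ B ∈ (j.primeFactors \ A).powersetCard (m₁+m₂-2*k), ∏ x ∈ B, Real.log x) * hc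
end
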